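/- Let n ≥ 1 be an integer and let s be an integer with 0 < s < 2^{n−1}. Define, for an integer i, F(s, i) = (s + 2^i·(2^n − 2s)/√2) / (√2 · √(s² + 2^{2i}·(2^n − 2s)²/2)). Then there exists an integer i with −n ≤ i ≤ n such that F(s, i) ≥ (1 + √2)/√6. -/

import Mathlib

/-- `F(s, i) = (s + 2^i (2^n − 2s)/√2) / (√2 · √(s² + 2^{2i} (2^n − 2s)²/2))`,
the inner product `⟨+|φ⟩` from the PostBQP = PP algorithm. -/
noncomputable def postSelF (n : ℕ) (s : ℤ) (i : ℤ) : ℝ :=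
  ((s : ℝ) + (2 : ℝ) ^ i * ((2 : ℝ) ^ n - 2 * (s : ℝ)) / Real.sqrt 2) /
    (Real.sqrt 2 *
      Real.sqrt ((s : ℝ) ^ 2 + (2 : ℝ) ^ (2 * i) * ((2 : ℝ) ^ n - 2 * (s : ℝ)) ^ 2 / 2))

/-!
As a function of `r = c/a`, the overlap `(a + c)/(√2 ‖(a, c)‖)` decreases away from `r = 1`, so on
`r ∈ [1/√2, √2]` it is at least its endpoint value `(1 + √2)/√6`. For `a = s` and
`c = 2^i (2^n − 2s)/√2` that window is hit by taking `2^i` to be the least power of two above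
`s/(2^n − 2s)`, a ratio lying in `[2^{-n}, 2^n]`.
-/

open Real

/-- The overlap `⟨+|φ⟩` of `|+⟩` with the unit vector along `(a, c)`. -/
noncomputable def plusOverlap (a c : ℝ) : ℝ :=
  (a + c) / (√2 * √(a ^ 2 + c ^ 2))

lemma postSelF_eq_plusOverlap (n : ℕ) (s i : ℤ) :
    postSelF n s i = plusOverlap s (2 ^ i * (2 ^ n - 2 * s) / √2) := by
  have h2i : (2 : ℝ) ^ (2 * i) = ((2 : ℝ) ^ i) ^ 2 := by rw [mul_comm, zpow_mul]; norm_cast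
  rw [postSelF, plusOverlap, div_pow, mul_pow, sq_sqrt zero_le_two, h2i]

lemma sqrt_two_mul_sq_add_sq_le {a c : ℝ} (hac : a ≤ √2 * c) (hca : c ≤ √2 * a) :
    √2 * (a ^ 2 + c ^ 2) ≤ 3 * (a * c) := by
  have hprod : 0 ≤ (√2 * c - a) * (√2 * a - c) := mul_nonneg (by linarith) (by linarith)
  have hexpand : (√2 * c - a) * (√2 * a - c) = 3 * (a * c) - √2 * (a ^ 2 + c ^ 2) := by
    linear_combination (a * c) * sq_sqrt (zero_le_two : (0 : ℝ) ≤ 2)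
  linarith

lemma one_add_sqrt_two_div_sqrt_six_le_plusOverlap {a c : ℝ} (ha : 0 < a) (hac : a ≤ √2 * c)
    (hca : c ≤ √2 * a) : (1 + √2) / √6 ≤ plusOverlap a c := by
  have hc : 0 < c := by nlinarith [sqrt_nonneg 2]
  have hS : 0 < a ^ 2 + c ^ 2 := by positivity
  rw [plusOverlap, ← pow_le_pow_iff_left₀ (by positivity) (by positivity) two_ne_zero,
    div_pow, div_pow, mul_pow, sq_sqrt (by norm_num), sq_sqrt hS.le, sq_sqrt zero_le_two,
    div_le_div_iff₀ (by norm_num) (by positivity)]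
  nlinarith [sqrt_two_mul_sq_add_sq_le hac hca, sq_sqrt (zero_le_two : (0 : ℝ) ≤ 2)]

lemma exists_zpow_mem_Icc_self_mul {R : Type*} [Semifield R] [LinearOrder R]
    [IsStrictOrderedRing R] [FloorSemiring R] {b : ℕ} (hb : 1 < b) {x : R} {m M : ℤ}
    (hm : (b : R) ^ m ≤ x) (hM : x ≤ (b : R) ^ M) :
    ∃ i : ℤ, m ≤ i ∧ i ≤ M ∧ x ≤ (b : R) ^ i ∧ (b : R) ^ i ≤ b * x := by
  have hb0 : (0 : R) < b := by exact_mod_cast Nat.zero_lt_of_lt hb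
  have hx : 0 < x := (zpow_pos hb0 m).trans_le hm
  refine ⟨Int.clog b x, ?_, (Int.le_zpow_iff_clog_le hb hx).1 hM, Int.self_le_zpow_clog hb x, ?_⟩
  · simpa only [Int.clog_zpow hb] using Int.clog_mono_right (b := b) (zpow_pos hb0 m) hm
  · have h := Int.zpow_pred_clog_lt_self hb hx
    rw [zpow_sub_one₀ hb0.ne', ← div_eq_mul_inv, div_lt_iff₀' hb0] at h
    exact h.le

/-- For `n ≥ 1` and an integer `s` with `0 < s < 2^{n−1}`, there exists an integer
`i ∈ [−n, n]` with `F(s, i) ≥ (1 + √2)/√6`. -/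
theorem exists_good_postselection (n : ℕ) (hn : 1 ≤ n) (s : ℤ) (hs : 0 < s)
    (hs' : s < 2 ^ (n - 1)) :
    ∃ i : ℤ, -(n : ℤ) ≤ i ∧ i ≤ (n : ℤ) ∧
      (1 + Real.sqrt 2) / Real.sqrt 6 ≤ postSelF n s i := by
  have hpow : (2 : ℤ) ^ n = 2 * 2 ^ (n - 1) := by rw [← pow_succ', Nat.sub_add_cancel hn]
  have ha : (1 : ℝ) ≤ s := by exact_mod_cast hs
  have hb : (2 : ℝ) ≤ 2 ^ n - 2 * s := by exact_mod_cast (by omega : (2 : ℤ) ≤ 2 ^ n - 2 * s)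
  set b : ℝ := 2 ^ n - 2 * s
  have hb0 : 0 < b := by linarith
  have h_lower : (2 : ℝ) ^ (-(n : ℤ)) ≤ s / b := calc
    (2 : ℝ) ^ (-(n : ℤ)) = 1 / 2 ^ n := by rw [zpow_neg, zpow_natCast, one_div]
    _ ≤ 1 / b := one_div_le_one_div_of_le hb0 (by linarith)
    _ ≤ s / b := div_le_div_of_nonneg_right ha hb0.le
  have h_upper : s / b ≤ (2 : ℝ) ^ (n : ℤ) := calc
    s / b ≤ s := div_le_self (by linarith) (by linarith)
    _ ≤ (2 : ℝ) ^ (n : ℤ) := by rw [zpow_natCast]; linarith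
  obtain ⟨i, hmi, hiM, hlo, hhi⟩ := exists_zpow_mem_Icc_self_mul (R := ℝ) (b := 2) one_lt_two
    (m := -n) (M := n) (by exact_mod_cast h_lower) (by exact_mod_cast h_upper)
  rw [Nat.cast_ofNat, div_le_iff₀ hb0] at hlo
  rw [Nat.cast_ofNat, mul_div_assoc', le_div_iff₀ hb0] at hhi
  refine ⟨i, hmi, hiM, postSelF_eq_plusOverlap n s i ▸
    one_add_sqrt_two_div_sqrt_six_le_plusOverlap (by linarith) ?_ ?_⟩
  · rwa [mul_div_cancel₀ _ (by positivity)]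
  · rw [div_le_iff₀ (by positivity), mul_right_comm, mul_self_sqrt zero_le_two]
    linarith
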